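/- The group G(Ẽ₆^{(1,1)}) defined by the elliptic Dynkin presentation of type Ẽ₆^{(1,1)} is isomorphic to the group G'(Ẽ₆^{(1,1)}) defined by the new presentation with infinitely many generators tᵢ (i ∈ ℤ). -/

import Mathlib

/-!
STATEMENT 6: The group G(Ẽ₆^{(1,1)}) defined by the elliptic Dynkin presentation is isomorphic
to the group G'(Ẽ₆^{(1,1)}) defined by the new presentation with infinitely many
generators tᵢ (i ∈ ℤ).
-/

namespace EllipticE6

/-- Generators of `G(Ẽ₆^{(1,1)})`: `Sum.inl i` is `tᵢ` (`i ∈ {0,1}`),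
`Sum.inr j` is `s_(j+1)` (so `Sum.inr 0` is `s₁`, ..., `Sum.inr 5` is `s₆`). -/
abbrev GenG : Type := Fin 2 ⊕ Fin 6

/-- Generators of `G'(Ẽ₆^{(1,1)})`: `Sum.inl i` is `tᵢ` (`i ∈ ℤ`),
`Sum.inr j` is `s_(j+1)`. -/
abbrev GenG' : Type := ℤ ⊕ Fin 6

/-- The braid relator `(aba)⁻¹(bab)` encoding the relation `aba = bab`. -/
def br {α : Type} (a b : FreeGroup α) : FreeGroup α := (a * b * a)⁻¹ * (b * a * b)

/-- The commutation relator `(ab)⁻¹(ba)` encoding the relation `ab = ba`. -/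
def cm {α : Type} (a b : FreeGroup α) : FreeGroup α := (a * b)⁻¹ * (b * a)

/-- The pairs of (0-indexed) `s`-generators joined by an edge in the diagram,
i.e. satisfying a braid relation: (s₁,s₄), (s₂,s₅), (s₃,s₆). -/
def braidPairs : List (Fin 6 × Fin 6) := [(0, 3), (1, 4), (2, 5)]

def tG (i : Fin 2) : FreeGroup GenG := FreeGroup.of (Sum.inl i)
def sG (j : Fin 6) : FreeGroup GenG := FreeGroup.of (Sum.inr j)

/-- Relators of the elliptic Dynkin presentation of `G(Ẽ₆^{(1,1)})`:
braid relations between `t₀, t₁` and `s₁, s₂, s₃`, braid relations along the edges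
of the `s`-part of the diagram, the elliptic relations for `s₁, s₂, s₃`, and
commutation relations for all remaining pairs of distinct generators except `{t₀,t₁}`. -/
def relsG : Set (FreeGroup GenG) :=
  { r | (∃ i : Fin 2, ∃ j : Fin 6, j.val < 3 ∧ r = br (tG i) (sG j)) ∨
        (∃ p ∈ braidPairs, r = br (sG p.1) (sG p.2)) ∨
        (∃ j : Fin 6, j.val < 3 ∧
          r = (sG j * tG 1 * tG 0 * sG j * tG 1 * tG 0)⁻¹ *
              (tG 1 * tG 0 * sG j * tG 1 * tG 0 * sG j)) ∨
        (∃ i j : Fin 6, i ≠ j ∧ (i, j) ∉ braidPairs ∧ (j, i) ∉ braidPairs ∧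
          r = cm (sG i) (sG j)) ∨
        (∃ i : Fin 2, ∃ j : Fin 6, 3 ≤ j.val ∧ r = cm (tG i) (sG j)) }

def tG' (i : ℤ) : FreeGroup GenG' := FreeGroup.of (Sum.inl i)
def sG' (j : Fin 6) : FreeGroup GenG' := FreeGroup.of (Sum.inr j)

/-- Relators of the new presentation of `G'(Ẽ₆^{(1,1)})`: braid relations between
every `tᵢ` (`i ∈ ℤ`) and `s₁, s₂, s₃`, the relations `tᵢtᵢ₋₁ = tⱼtⱼ₋₁`, braid relations
along the edges of the `s`-part of the diagram, commutation relations between the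
remaining pairs of distinct `s`-generators, and commutation of every `tᵢ` with
`s₄, …, s₆`. -/
def relsG' : Set (FreeGroup GenG') :=
  { r | (∃ i : ℤ, ∃ j : Fin 6, j.val < 3 ∧ r = br (tG' i) (sG' j)) ∨
        (∃ i j : ℤ, r = (tG' i * tG' (i - 1))⁻¹ * (tG' j * tG' (j - 1))) ∨
        (∃ p ∈ braidPairs, r = br (sG' p.1) (sG' p.2)) ∨
        (∃ i j : Fin 6, i ≠ j ∧ (i, j) ∉ braidPairs ∧ (j, i) ∉ braidPairs ∧
          r = cm (sG' i) (sG' j)) ∨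
        (∃ i : ℤ, ∃ j : Fin 6, 3 ≤ j.val ∧ r = cm (tG' i) (sG' j)) }

/-!
The map `G → G'` fixes `t₀, t₁, s₁, …, s₆`. The key identity: if `a` and `b` braid with `s` and
`c = ba`, then `bab⁻¹` (and likewise `a⁻¹ba`) braids with `s` iff `s c s c = c s c s`. In `G'` we
have `t₂ = t₁t₀t₁⁻¹`, so this turns the braid relations of `t₂` into the elliptic relations.
Conversely, in `G` the elements `tᵢ := cᵏ t_{i mod 2} c⁻ᵏ` (`k = ⌊i/2⌋`, `c = t₁t₀`) satisfy
`tᵢtᵢ₋₁ = c`, hence `tᵢ₊₁ = tᵢtᵢ₋₁tᵢ⁻¹` and `tᵢ₋₁ = tᵢ⁻¹tᵢ₊₁tᵢ`, and the elliptic relations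
propagate the braid relations with `s₁, s₂, s₃` from `i = 0, 1` to all `i ∈ ℤ`. The two maps are
mutually inverse because a sequence with `tᵢtᵢ₋₁ = c` is determined by `t₀`.
-/

section Braided
variable {G : Type*} [Group G]

def Braided (a b : G) : Prop := a * b * a = b * a * b

theorem Braided.symm {a b : G} (h : Braided a b) : Braided b a := Eq.symm h

theorem Braided.inv_mul_mul {a b : G} (h : Braided a b) : a⁻¹ * b * a = b * a * b⁻¹ :=
  calc a⁻¹ * b * a = a⁻¹ * (b * a * b) * b⁻¹ := by group
    _ = b * a * b⁻¹ := by rw [← show a * b * a = b * a * b from h]; group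

theorem braided_conj_iff {a b s : G} (ha : Braided a s) (hb : Braided b s) :
    Braided (b * a * b⁻¹) s ↔ s * (b * a) * s * (b * a) = b * a * s * (b * a) * s := by
  have lhs : b * a * b⁻¹ * s * (b * a * b⁻¹) = b * a * s * (b * a) * s * (a⁻¹ * s⁻¹ * b⁻¹) :=
    calc b * a * b⁻¹ * s * (b * a * b⁻¹) = b * a * (b⁻¹ * s * b) * a * b⁻¹ := by group
      _ = b * a * (s * b * s⁻¹) * a * b⁻¹ := by rw [hb.inv_mul_mul]
      _ = b * a * s * b * (s⁻¹ * a * s) * s⁻¹ * b⁻¹ := by group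
      _ = b * a * s * b * (a * s * a⁻¹) * s⁻¹ * b⁻¹ := by rw [ha.symm.inv_mul_mul]
      _ = b * a * s * (b * a) * s * (a⁻¹ * s⁻¹ * b⁻¹) := by group
  have rhs : s * (b * a * b⁻¹) * s = s * (b * a) * s * (b * a) * (a⁻¹ * s⁻¹ * b⁻¹) :=
    calc s * (b * a * b⁻¹) * s = s * (b * a) * (b⁻¹ * s * b) * b⁻¹ := by group
      _ = s * (b * a) * (s * b * s⁻¹) * b⁻¹ := by rw [hb.inv_mul_mul]
      _ = s * (b * a) * s * (b * a) * (a⁻¹ * s⁻¹ * b⁻¹) := by group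
  rw [Braided, lhs, rhs, mul_left_inj, eq_comm]

theorem braided_inv_conj_iff {a b s : G} (ha : Braided a s) (hb : Braided b s) :
    Braided (a⁻¹ * b * a) s ↔ s * (b * a) * s * (b * a) = b * a * s * (b * a) * s := by
  have lhs : a⁻¹ * b * a * s * (a⁻¹ * b * a) = a⁻¹ * s⁻¹ * b⁻¹ * (s * (b * a) * s * (b * a)) :=
    calc a⁻¹ * b * a * s * (a⁻¹ * b * a) = a⁻¹ * b * (a * s * a⁻¹) * (b * a) := by group
      _ = a⁻¹ * b * (s⁻¹ * a * s) * (b * a) := by rw [ha.symm.inv_mul_mul]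
      _ = a⁻¹ * (b * s * b⁻¹)⁻¹ * (b * a * s * b * a) := by group
      _ = a⁻¹ * (s⁻¹ * b * s)⁻¹ * (b * a * s * b * a) := by rw [← hb.symm.inv_mul_mul]
      _ = a⁻¹ * s⁻¹ * b⁻¹ * (s * (b * a) * s * (b * a)) := by group
  have rhs : s * (a⁻¹ * b * a) * s = a⁻¹ * s⁻¹ * b⁻¹ * (b * a * s * (b * a) * s) :=
    calc s * (a⁻¹ * b * a) * s = a⁻¹ * (a * s * a⁻¹) * (b * a * s) := by group
      _ = a⁻¹ * (s⁻¹ * a * s) * (b * a * s) := by rw [ha.symm.inv_mul_mul]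
      _ = a⁻¹ * s⁻¹ * b⁻¹ * (b * a * s * (b * a) * s) := by group
  rw [Braided, lhs, rhs, mul_right_inj, eq_comm]

end Braided

section MulPredSeq
variable {G : Type*} [Group G] {x : ℤ → G} {c : G}

theorem mul_pred_succ (hx : ∀ i, x i * x (i - 1) = c) (i : ℤ) : x (i + 1) * x i = c := by
  simpa using hx (i + 1)

theorem forall_of_conj_closed (hx : ∀ i, x i * x (i - 1) = c) {P : G → Prop}
    (h0 : P (x 0)) (h1 : P (x 1))
    (up : ∀ a b, b * a = c → P a → P b → P (b * a * b⁻¹))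
    (down : ∀ a b, b * a = c → P a → P b → P (a⁻¹ * b * a)) (i : ℤ) : P (x i) := by
  suffices h : ∀ i, P (x i) ∧ P (x (i + 1)) from (h i).1
  intro i
  induction i using Int.inductionOn' (b := 0) with
  | zero => exact ⟨h0, by simpa using h1⟩
  | succ k _ ih =>
    have e : x (k + 1 + 1) = x (k + 1) * x k * (x (k + 1))⁻¹ :=
      eq_mul_inv_of_mul_eq ((mul_pred_succ hx (k + 1)).trans (mul_pred_succ hx k).symm)
    exact ⟨ih.2, e ▸ up _ _ (mul_pred_succ hx k) ih.1 ih.2⟩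
  | pred k _ ih =>
    have e : x (k - 1) = (x k)⁻¹ * x (k + 1) * x k := by
      rw [mul_assoc, mul_pred_succ hx k]
      exact eq_inv_mul_of_mul_eq (hx k)
    exact ⟨e ▸ down _ _ (mul_pred_succ hx k) ih.1 ih.2, by simpa using ih.1⟩

theorem eq_of_mul_pred_eq (hx : ∀ i, x i * x (i - 1) = c) {y : ℤ → G}
    (hy : ∀ i, y i * y (i - 1) = c) (h0 : x 0 = y 0) : x = y := by
  funext i
  induction i using Int.inductionOn' (b := 0) with
  | zero => exact h0
  | succ k _ ih =>
    rw [eq_mul_inv_of_mul_eq (mul_pred_succ hx k), eq_mul_inv_of_mul_eq (mul_pred_succ hy k), ih]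
  | pred k _ ih => rw [eq_inv_mul_of_mul_eq (hx k), eq_inv_mul_of_mul_eq (hy k), ih]

theorem braided_of_mul_pred_eq (hx : ∀ i, x i * x (i - 1) = c) {s : G}
    (h0 : Braided (x 0) s) (h1 : Braided (x 1) s) (hc : s * c * s * c = c * s * c * s) (i : ℤ) :
    Braided (x i) s :=
  forall_of_conj_closed hx (P := (Braided · s)) h0 h1
    (fun _ _ hab ha hb => (braided_conj_iff ha hb).2 (hab ▸ hc))
    (fun _ _ hab ha hb => (braided_inv_conj_iff ha hb).2 (hab ▸ hc)) i

theorem commute_of_mul_pred_eq (hx : ∀ i, x i * x (i - 1) = c) {s : G}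
    (h0 : Commute s (x 0)) (h1 : Commute s (x 1)) (i : ℤ) : Commute s (x i) :=
  forall_of_conj_closed hx h0 h1
    (fun _ _ _ ha hb => (hb.mul_right ha).mul_right hb.inv_right)
    (fun _ _ _ ha hb => (ha.inv_right.mul_right hb).mul_right ha) i

end MulPredSeq

section TSeq
variable {G : Type*} [Group G]

def tSeq (t₀ t₁ : G) (i : ℤ) : G :=
  (t₁ * t₀) ^ (i / 2) * (if i % 2 = 0 then t₀ else t₁) * (t₁ * t₀) ^ (-(i / 2))

@[simp]
theorem tSeq_zero (t₀ t₁ : G) : tSeq t₀ t₁ 0 = t₀ := by simp [tSeq]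

@[simp]
theorem tSeq_one (t₀ t₁ : G) : tSeq t₀ t₁ 1 = t₁ := by simp [tSeq]

theorem tSeq_mul_pred (t₀ t₁ : G) (i : ℤ) : tSeq t₀ t₁ i * tSeq t₀ t₁ (i - 1) = t₁ * t₀ := by
  obtain ⟨k, rfl | rfl⟩ := Int.even_or_odd' i
  · have h : (2 * k - 1) / 2 = k - 1 ∧ (2 * k - 1) % 2 = 1 := by omega
    simp only [tSeq, Int.mul_ediv_cancel_left _ two_ne_zero, Int.mul_emod_right, h, if_true,
      one_ne_zero, if_false]
    group
  · have h : (2 * k + 1) / 2 = k ∧ (2 * k + 1) % 2 = 1 := by omega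
    simp only [tSeq, h, add_sub_cancel_right, Int.mul_ediv_cancel_left _ two_ne_zero,
      Int.mul_emod_right, if_true, one_ne_zero, if_false]
    calc _ = (t₁ * t₀) ^ k * (t₁ * t₀) * (t₁ * t₀) ^ (-k) := by group
      _ = t₁ * t₀ := by rw [(Commute.zpow_self (t₁ * t₀) k).eq]; group

theorem map_tSeq {H : Type*} [Group H] (f : G →* H) (t₀ t₁ : G) (i : ℤ) :
    f (tSeq t₀ t₁ i) = tSeq (f t₀) (f t₁) i := by
  simp [tSeq, apply_ite f]

end TSeq

section PresentedGroup
variable {α : Type} {rels : Set (FreeGroup α)}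

theorem braided_mk_of_br_mem {a b : FreeGroup α} (h : br a b ∈ rels) :
    Braided (PresentedGroup.mk rels a) (PresentedGroup.mk rels b) := by
  have h := PresentedGroup.mk_eq_mk_of_inv_mul_mem h
  simp only [map_mul] at h
  exact h

theorem commute_mk_of_cm_mem {a b : FreeGroup α} (h : cm a b ∈ rels) :
    Commute (PresentedGroup.mk rels a) (PresentedGroup.mk rels b) := by
  have h := PresentedGroup.mk_eq_mk_of_inv_mul_mem h
  simp only [map_mul] at h
  exact h

variable {H : Type*} [Group H] (f : α → H) (a b : α)

theorem lift_br_of_eq_one_iff :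
    FreeGroup.lift f (br (.of a) (.of b)) = 1 ↔ Braided (f a) (f b) := by
  simp only [br, Braided, map_mul, map_inv, FreeGroup.lift_apply_of, inv_mul_eq_one]

theorem lift_cm_of_eq_one_iff :
    FreeGroup.lift f (cm (.of a) (.of b)) = 1 ↔ Commute (f a) (f b) := by
  simp only [cm, commute_iff_eq, map_mul, map_inv, FreeGroup.lift_apply_of, inv_mul_eq_one]

end PresentedGroup

abbrev T (i : Fin 2) : PresentedGroup relsG := .of (.inl i)
abbrev S (j : Fin 6) : PresentedGroup relsG := .of (.inr j)
abbrev T' (i : ℤ) : PresentedGroup relsG' := .of (.inl i)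
abbrev S' (j : Fin 6) : PresentedGroup relsG' := .of (.inr j)

theorem braided_T_S (i : Fin 2) (j : Fin 6) (hj : j.val < 3) : Braided (T i) (S j) :=
  braided_mk_of_br_mem (Or.inl ⟨i, j, hj, rfl⟩)

theorem braided_S_S {p : Fin 6 × Fin 6} (hp : p ∈ braidPairs) : Braided (S p.1) (S p.2) :=
  braided_mk_of_br_mem (Or.inr (Or.inl ⟨p, hp, rfl⟩))

theorem elliptic_S_T (j : Fin 6) (hj : j.val < 3) :
    S j * (T 1 * T 0) * S j * (T 1 * T 0) = T 1 * T 0 * S j * (T 1 * T 0) * S j := by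
  have h := PresentedGroup.mk_eq_mk_of_inv_mul_mem (rels := relsG)
    (Or.inr (Or.inr (Or.inl ⟨j, hj, rfl⟩)))
  simp only [map_mul, mul_assoc] at h ⊢
  exact h

theorem commute_S_S {i j : Fin 6} (hij : i ≠ j) (h₁ : (i, j) ∉ braidPairs)
    (h₂ : (j, i) ∉ braidPairs) : Commute (S i) (S j) :=
  commute_mk_of_cm_mem (Or.inr (Or.inr (Or.inr (Or.inl ⟨i, j, hij, h₁, h₂, rfl⟩))))

theorem commute_T_S (i : Fin 2) (j : Fin 6) (hj : 3 ≤ j.val) : Commute (T i) (S j) :=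
  commute_mk_of_cm_mem (Or.inr (Or.inr (Or.inr (Or.inr ⟨i, j, hj, rfl⟩))))

theorem braided_T'_S' (i : ℤ) (j : Fin 6) (hj : j.val < 3) : Braided (T' i) (S' j) :=
  braided_mk_of_br_mem (Or.inl ⟨i, j, hj, rfl⟩)

theorem T'_mul_pred (i : ℤ) : T' i * T' (i - 1) = T' 1 * T' 0 := by
  have h := PresentedGroup.mk_eq_mk_of_inv_mul_mem (rels := relsG') (Or.inr (Or.inl ⟨i, 1, rfl⟩))
  simp only [map_mul, sub_self] at h
  exact h

theorem braided_S'_S' {p : Fin 6 × Fin 6} (hp : p ∈ braidPairs) : Braided (S' p.1) (S' p.2) :=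
  braided_mk_of_br_mem (Or.inr (Or.inr (Or.inl ⟨p, hp, rfl⟩)))

theorem commute_S'_S' {i j : Fin 6} (hij : i ≠ j) (h₁ : (i, j) ∉ braidPairs)
    (h₂ : (j, i) ∉ braidPairs) : Commute (S' i) (S' j) :=
  commute_mk_of_cm_mem (Or.inr (Or.inr (Or.inr (Or.inl ⟨i, j, hij, h₁, h₂, rfl⟩))))

theorem commute_T'_S' (i : ℤ) (j : Fin 6) (hj : 3 ≤ j.val) : Commute (T' i) (S' j) :=
  commute_mk_of_cm_mem (Or.inr (Or.inr (Or.inr (Or.inr ⟨i, j, hj, rfl⟩))))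

theorem elliptic_S'_T' (j : Fin 6) (hj : j.val < 3) :
    S' j * (T' 1 * T' 0) * S' j * (T' 1 * T' 0) = T' 1 * T' 0 * S' j * (T' 1 * T' 0) * S' j := by
  have h₂ : T' 2 = T' 1 * T' 0 * (T' 1)⁻¹ := eq_mul_inv_of_mul_eq (by simpa using T'_mul_pred 2)
  exact (braided_conj_iff (braided_T'_S' 0 j hj) (braided_T'_S' 1 j hj)).1
    (h₂ ▸ braided_T'_S' 2 j hj)

def genToG' : GenG → PresentedGroup relsG'
  | .inl i => T' i
  | .inr j => S' j

theorem lift_genToG'_eq_one : ∀ r ∈ relsG, FreeGroup.lift genToG' r = 1 := by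
  rintro r (⟨i, j, hj, rfl⟩ | ⟨p, hp, rfl⟩ | ⟨j, hj, rfl⟩ | ⟨i, j, hij, h₁, h₂, rfl⟩ |
    ⟨i, j, hj, rfl⟩)
  · exact (lift_br_of_eq_one_iff _ _ _).2 (braided_T'_S' i j hj)
  · exact (lift_br_of_eq_one_iff _ _ _).2 (braided_S'_S' hp)
  · simp only [tG, sG, map_mul, map_inv, FreeGroup.lift_apply_of, inv_mul_eq_one, genToG']
    have h := elliptic_S'_T' j hj
    simp only [mul_assoc] at h ⊢
    exact h
  · exact (lift_cm_of_eq_one_iff _ _ _).2 (commute_S'_S' hij h₁ h₂)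
  · exact (lift_cm_of_eq_one_iff _ _ _).2 (commute_T'_S' i j hj)

def genToG : GenG' → PresentedGroup relsG
  | .inl i => tSeq (T 0) (T 1) i
  | .inr j => S j

theorem lift_genToG_eq_one : ∀ r ∈ relsG', FreeGroup.lift genToG r = 1 := by
  rintro r (⟨i, j, hj, rfl⟩ | ⟨i, j, rfl⟩ | ⟨p, hp, rfl⟩ | ⟨i, j, hij, h₁, h₂, rfl⟩ |
    ⟨i, j, hj, rfl⟩)
  · exact (lift_br_of_eq_one_iff _ _ _).2 <| braided_of_mul_pred_eq (tSeq_mul_pred _ _)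
      (by simpa using braided_T_S 0 j hj) (by simpa using braided_T_S 1 j hj) (elliptic_S_T j hj) i
  · simp only [tG', map_mul, map_inv, FreeGroup.lift_apply_of, genToG, tSeq_mul_pred,
      inv_mul_cancel]
  · exact (lift_br_of_eq_one_iff _ _ _).2 (braided_S_S hp)
  · exact (lift_cm_of_eq_one_iff _ _ _).2 (commute_S_S hij h₁ h₂)
  · refine (lift_cm_of_eq_one_iff _ _ _).2
      (commute_of_mul_pred_eq (tSeq_mul_pred _ _) ?_ ?_ i).symm
    · simpa [genToG] using (commute_T_S 0 j hj).symm
    · simpa [genToG] using (commute_T_S 1 j hj).symm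

def toG' : PresentedGroup relsG →* PresentedGroup relsG' :=
  PresentedGroup.toGroup lift_genToG'_eq_one

def toG : PresentedGroup relsG' →* PresentedGroup relsG :=
  PresentedGroup.toGroup lift_genToG_eq_one

theorem toG_comp_toG' : toG.comp toG' = MonoidHom.id _ := by
  refine PresentedGroup.ext fun
    | .inl i => ?_
    | .inr j => rfl
  fin_cases i <;> simp [toG, toG', genToG, genToG']

theorem toG'_comp_toG : toG'.comp toG = MonoidHom.id _ := by
  refine PresentedGroup.ext fun
    | .inl i => ?_
    | .inr j => rfl
  have hT : toG' (T 0) = T' 0 ∧ toG' (T 1) = T' 1 := ⟨rfl, rfl⟩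
  simp only [MonoidHom.comp_apply, MonoidHom.id_apply, toG, PresentedGroup.toGroup.of, genToG,
    map_tSeq, hT.1, hT.2]
  exact congrFun (eq_of_mul_pred_eq (tSeq_mul_pred _ _) T'_mul_pred (tSeq_zero _ _)) i

theorem G_iso_G' : Nonempty (PresentedGroup relsG ≃* PresentedGroup relsG') :=
  ⟨toG'.toMulEquiv toG toG_comp_toG' toG'_comp_toG⟩

end EllipticE6
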